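/- Let (Λ,d) be a k-graph satisfying the standing assumption (★). Then every cylinder set Z(λ,n) is a compact subset of Λ^Δ in the topology generated by the cylinder sets; moreover, if Λ⁰ is finite then Λ^Δ is compact. -/

import Mathlib

open scoped Classical
open TopologicalSpace MeasureTheory

/-- A `k`-graph: a countable small category with a degree functor to `ℕ^k`
satisfying the unique factorisation property.  Objects are identified with
the degree-zero morphisms. -/
structure KGraph (k : ℕ) where
  Mor : Type
  countable : Countable Mor
  src : Mor → Mor
  rng : Mor → Mor
  deg : Mor → Fin k → ℕ
  comp : (lam mu : Mor) → src lam = rng mu → Mor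
  deg_src : ∀ lam, deg (src lam) = 0
  deg_rng : ∀ lam, deg (rng lam) = 0
  src_obj : ∀ v, deg v = 0 → src v = v
  rng_obj : ∀ v, deg v = 0 → rng v = v
  src_comp : ∀ lam mu h, src (comp lam mu h) = src mu
  rng_comp : ∀ lam mu h, rng (comp lam mu h) = rng lam
  deg_comp : ∀ lam mu h, deg (comp lam mu h) = deg lam + deg mu
  id_comp : ∀ lam (h : src (rng lam) = rng lam), comp (rng lam) lam h = lam
  comp_id : ∀ lam (h : src lam = rng (src lam)), comp lam (src lam) h = lam
  assoc : ∀ l m n (h1 : src l = rng m) (h2 : src m = rng n)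
      (h3 : src (comp l m h1) = rng n) (h4 : src l = rng (comp m n h2)),
      comp (comp l m h1) n h3 = comp l (comp m n h2) h4
  factor : ∀ lam (n1 n2 : Fin k → ℕ), deg lam = n1 + n2 →
      ∃! p : Mor × Mor, deg p.1 = n1 ∧ deg p.2 = n2 ∧
        ∃ h : src p.1 = rng p.2, comp p.1 p.2 h = lam

namespace KGraph

variable {k : ℕ}

/-- The vertices (objects) of a `k`-graph are the degree-zero morphisms. -/
def IsVertex (Λ : KGraph k) (v : Λ.Mor) : Prop := Λ.deg v = 0

/-- Standing assumption (★): for each `p ∈ ℕ^k` the restrictions of `r` and `s`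
to `Λ^p` are surjective (onto the vertices) and finite-to-one. -/
def Star (Λ : KGraph k) : Prop :=
  ∀ p : Fin k → ℕ,
    (∀ v, Λ.IsVertex v →
      (∃ lam, Λ.deg lam = p ∧ Λ.rng lam = v) ∧
      (∃ lam, Λ.deg lam = p ∧ Λ.src lam = v)) ∧
    (∀ v, Λ.IsVertex v →
      {lam | Λ.deg lam = p ∧ Λ.rng lam = v}.Finite ∧
      {lam | Λ.deg lam = p ∧ Λ.src lam = v}.Finite)

/-- Irreducibility (strong connectedness) of a `k`-graph. -/
def Irreducible (Λ : KGraph k) : Prop :=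
  ∀ u v, Λ.IsVertex u → Λ.IsVertex v →
    ∃ lam, Λ.deg lam ≠ 0 ∧ Λ.rng lam = u ∧ Λ.src lam = v

/-- Primitivity of a `k`-graph. -/
def Primitive (Λ : KGraph k) : Prop :=
  ∃ p : Fin k → ℕ, p ≠ 0 ∧ ∀ u v, Λ.IsVertex u → Λ.IsVertex v →
    ∃ lam, Λ.deg lam = p ∧ Λ.rng lam = u ∧ Λ.src lam = v

/-- The degree of a morphism, viewed in `ℤ^k`. -/
def degZ (Λ : KGraph k) (lam : Λ.Mor) : Fin k → ℤ := fun i => (Λ.deg lam i : ℤ)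

/-- The number of morphisms of degree `p` with range `u` and source `v`. -/
noncomputable def count (Λ : KGraph k) (p : Fin k → ℕ) (u v : Λ.Mor) : ℕ :=
  Nat.card {lam : Λ.Mor // Λ.deg lam = p ∧ Λ.rng lam = u ∧ Λ.src lam = v}

end KGraph

/-- A two-sided infinite path in a `k`-graph: a degree-preserving functor from
the `k`-graph `Δ = {(m,n) ∈ ℤ^k × ℤ^k : m ≤ n}` to `Λ`. -/
structure TwoSidedPath {k : ℕ} (Λ : KGraph k) where
  toFun : ∀ m n : Fin k → ℤ, m ≤ n → Λ.Mor
  deg_eq : ∀ m n (h : m ≤ n) (i : Fin k), (Λ.deg (toFun m n h) i : ℤ) = n i - m i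
  src_eq : ∀ m n (h : m ≤ n), Λ.src (toFun m n h) = toFun n n le_rfl
  rng_eq : ∀ m n (h : m ≤ n), Λ.rng (toFun m n h) = toFun m m le_rfl
  comp_eq : ∀ l m n (h1 : l ≤ m) (h2 : m ≤ n),
      Λ.comp (toFun l m h1) (toFun m n h2)
        ((src_eq l m h1).trans (rng_eq m n h2).symm) = toFun l n (h1.trans h2)

/-- A one-sided infinite path in a `k`-graph: a degree-preserving functor from
the `k`-graph `Ω = {(m,n) ∈ ℕ^k × ℕ^k : m ≤ n}` to `Λ`. -/
structure OneSidedPath {k : ℕ} (Λ : KGraph k) where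
  toFun : ∀ m n : Fin k → ℕ, m ≤ n → Λ.Mor
  deg_eq : ∀ m n (h : m ≤ n) (i : Fin k), Λ.deg (toFun m n h) i = n i - m i
  src_eq : ∀ m n (h : m ≤ n), Λ.src (toFun m n h) = toFun n n le_rfl
  rng_eq : ∀ m n (h : m ≤ n), Λ.rng (toFun m n h) = toFun m m le_rfl
  comp_eq : ∀ l m n (h1 : l ≤ m) (h2 : m ≤ n),
      Λ.comp (toFun l m h1) (toFun m n h2)
        ((src_eq l m h1).trans (rng_eq m n h2).symm) = toFun l n (h1.trans h2)

namespace TwoSidedPath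

variable {k : ℕ} {Λ : KGraph k}

theorem toFun_congr (x : TwoSidedPath Λ) {m n m' n' : Fin k → ℤ}
    (hm : m = m') (hn : n = n') (h : m ≤ n) (h' : m' ≤ n') :
    x.toFun m n h = x.toFun m' n' h' := by subst hm; subst hn; rfl

/-- The vertex `x(0)` of a two-sided path. -/
def obj0 (x : TwoSidedPath Λ) : Λ.Mor := x.toFun 0 0 le_rfl

end TwoSidedPath

theorem le_add_degZ {k : ℕ} (Λ : KGraph k) (n : Fin k → ℤ) (lam : Λ.Mor) :
    n ≤ n + Λ.degZ lam :=
  Pi.le_def.mpr fun i => by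
    show n i ≤ n i + (Λ.deg lam i : ℤ); omega

/-- The cylinder set `Z(λ, n) = {x ∈ Λ^Δ : x(n, n + d(λ)) = λ}`. -/
def ZCyl {k : ℕ} (Λ : KGraph k) (lam : Λ.Mor) (n : Fin k → ℤ) :
    Set (TwoSidedPath Λ) :=
  {x | x.toFun n (n + Λ.degZ lam) (le_add_degZ Λ n lam) = lam}

/-- The topology on `Λ^Δ` generated by the cylinder sets. -/
instance {k : ℕ} (Λ : KGraph k) : TopologicalSpace (TwoSidedPath Λ) :=
  TopologicalSpace.generateFrom {S | ∃ lam n, S = ZCyl Λ lam n}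

noncomputable instance {k : ℕ} (Λ : KGraph k) : MeasurableSpace (TwoSidedPath Λ) :=
  borel _

/-- The one-sided cylinder set `Z(λ) = {x ∈ Λ^Ω : x(0, d(λ)) = λ}`. -/
def OCyl {k : ℕ} (Λ : KGraph k) (lam : Λ.Mor) : Set (OneSidedPath Λ) :=
  {x | x.toFun 0 (Λ.deg lam) (Pi.le_def.mpr fun _ => Nat.zero_le _) = lam}

/-- The topology on `Λ^Ω` generated by the cylinder sets. -/
instance {k : ℕ} (Λ : KGraph k) : TopologicalSpace (OneSidedPath Λ) :=
  TopologicalSpace.generateFrom {S | ∃ lam, S = OCyl Λ lam}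

/-- The shift `σ^n` on the two-sided path space, for `n ∈ ℤ^k`. -/
def TwoSidedPath.shift {k : ℕ} {Λ : KGraph k} (n : Fin k → ℤ)
    (x : TwoSidedPath Λ) : TwoSidedPath Λ where
  toFun l m h := x.toFun (l + n) (m + n) (add_le_add_left h n)
  deg_eq l m h i := by
    show (Λ.deg (x.toFun (l + n) (m + n) (add_le_add_left h n)) i : ℤ) = m i - l i
    have h' := x.deg_eq (l + n) (m + n) (add_le_add_left h n) i
    simp only [Pi.add_apply] at h'
    omega
  src_eq l m h := x.src_eq (l + n) (m + n) (add_le_add_left h n)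
  rng_eq l m h := x.rng_eq (l + n) (m + n) (add_le_add_left h n)
  comp_eq l m m' h1 h2 :=
    x.comp_eq (l + n) (m + n) (m' + n) (add_le_add_left h1 n) (add_le_add_left h2 n)

/-- The shift `σ^p` on the one-sided path space, for `p ∈ ℕ^k`. -/
def OneSidedPath.shift {k : ℕ} {Λ : KGraph k} (p : Fin k → ℕ)
    (x : OneSidedPath Λ) : OneSidedPath Λ where
  toFun l m h := x.toFun (l + p) (m + p) (add_le_add_left h p)
  deg_eq l m h i := by
    show Λ.deg (x.toFun (l + p) (m + p) (add_le_add_left h p)) i = m i - l i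
    have h' := x.deg_eq (l + p) (m + p) (add_le_add_left h p) i
    simp only [Pi.add_apply] at h'
    omega
  src_eq l m h := x.src_eq (l + p) (m + p) (add_le_add_left h p)
  rng_eq l m h := x.rng_eq (l + p) (m + p) (add_le_add_left h p)
  comp_eq l m m' h1 h2 :=
    x.comp_eq (l + p) (m + p) (m' + p) (add_le_add_left h1 p) (add_le_add_left h2 p)

/-- The vector `(j, …, j) ∈ ℤ^k`, i.e. `j·e` where `e = (1,…,1)`. -/
def jvecZ (k : ℕ) (j : ℕ) : Fin k → ℤ := fun _ => (j : ℤ)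

theorem neg_jvecZ_le (k j : ℕ) : -(jvecZ k j) ≤ jvecZ k j :=
  Pi.le_def.mpr fun _ => by show -((j : ℤ)) ≤ (j : ℤ); omega

/-- Coercion `ℕ^k → ℤ^k`. -/
def coeZ {k : ℕ} (p : Fin k → ℕ) : Fin k → ℤ := fun i => (p i : ℤ)

theorem coeZ_le_coeZ {k : ℕ} {m n : Fin k → ℕ} (h : m ≤ n) : coeZ m ≤ coeZ n :=
  Pi.le_def.mpr fun i => by
    show ((m i : ℤ)) ≤ (n i : ℤ)
    exact_mod_cast Pi.le_def.mp h i

theorem neg_coeZ_le {k : ℕ} (m : Fin k → ℕ) : -(coeZ m) ≤ coeZ m :=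
  Pi.le_def.mpr fun i => by show -((m i : ℤ)) ≤ (m i : ℤ); omega

/-- The quantity `h(x,y) ∈ ℕ∞`:  `0` if `x(0) ≠ y(0)`, and otherwise
`1 + sup { j : x(-je, je) = y(-je, je) }`. -/
noncomputable def hdist {k : ℕ} {Λ : KGraph k} (x y : TwoSidedPath Λ) : ℕ∞ :=
  if x.obj0 = y.obj0 then
    1 + sSup {c : ℕ∞ | ∃ j : ℕ, c = (j : ℕ∞) ∧
        x.toFun (-(jvecZ k j)) (jvecZ k j) (neg_jvecZ_le k j) =
        y.toFun (-(jvecZ k j)) (jvecZ k j) (neg_jvecZ_le k j)}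
  else 0

/-- The metric `ρ(x,y) = r^{h(x,y)}`, with `r^∞ = 0`. -/
noncomputable def rho {k : ℕ} {Λ : KGraph k} (r : ℝ) (x y : TwoSidedPath Λ) : ℝ :=
  if hdist x y = ⊤ then 0 else r ^ (hdist x y).toNat

/-- The local contracting set `E_x`. -/
def Ex {k : ℕ} {Λ : KGraph k} (x : TwoSidedPath Λ) : Set (TwoSidedPath Λ) :=
  {y | ∀ m n (h : m ≤ n), 0 ≤ m → y.toFun m n h = x.toFun m n h}

/-- The local expanding set `F_x`. -/
def Fx {k : ℕ} {Λ : KGraph k} (x : TwoSidedPath Λ) : Set (TwoSidedPath Λ) :=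
  {y | ∀ m n (h : m ≤ n), n ≤ 0 → y.toFun m n h = x.toFun m n h}

/-- The restriction map `π : Λ^Δ → Λ^Ω`. -/
def TwoSidedPath.restrict {k : ℕ} {Λ : KGraph k} (x : TwoSidedPath Λ) :
    OneSidedPath Λ where
  toFun m n h := x.toFun (coeZ m) (coeZ n) (coeZ_le_coeZ h)
  deg_eq m n h i := by
    show Λ.deg (x.toFun (coeZ m) (coeZ n) (coeZ_le_coeZ h)) i = n i - m i
    have h' := x.deg_eq (coeZ m) (coeZ n) (coeZ_le_coeZ h) i
    simp only [coeZ] at h'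
    omega
  src_eq m n h := x.src_eq (coeZ m) (coeZ n) (coeZ_le_coeZ h)
  rng_eq m n h := x.rng_eq (coeZ m) (coeZ n) (coeZ_le_coeZ h)
  comp_eq l m n h1 h2 :=
    x.comp_eq (coeZ l) (coeZ m) (coeZ n) (coeZ_le_coeZ h1) (coeZ_le_coeZ h2)

/-- Stable equivalence: `x ∼ₛ y` iff the two paths eventually agree to the right. -/
def SRel {k : ℕ} {Λ : KGraph k} (x y : TwoSidedPath Λ) : Prop :=
  ∃ m : Fin k → ℤ, ∀ n (h : m ≤ n), x.toFun m n h = y.toFun m n h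

/-- Unstable equivalence: `x ∼ᵤ y` iff the two paths eventually agree to the left. -/
def URel {k : ℕ} {Λ : KGraph k} (x y : TwoSidedPath Λ) : Prop :=
  ∃ n : Fin k → ℤ, ∀ m (h : m ≤ n), x.toFun m n h = y.toFun m n h

/-- Asymptotic equivalence: `x ∼ₐ y` iff `x ∼ₛ y` and `x ∼ᵤ y`. -/
def ARel {k : ℕ} {Λ : KGraph k} (x y : TwoSidedPath Λ) : Prop :=
  ∃ m : Fin k → ℕ, ∀ n : Fin k → ℤ, coeZ m ≤ n →
    (∀ h : coeZ m ≤ n, x.toFun (coeZ m) n h = y.toFun (coeZ m) n h) ∧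
    (∀ h' : -n ≤ -(coeZ m), x.toFun (-n) (-(coeZ m)) h' = y.toFun (-n) (-(coeZ m)) h')

/-- The groupoid `G_{s,m}` of pairs agreeing from `m ∈ ℤ^k` onwards. -/
def Gsm {k : ℕ} (Λ : KGraph k) (m : Fin k → ℤ) :
    Set (TwoSidedPath Λ × TwoSidedPath Λ) :=
  {p | ∀ n (h : m ≤ n), p.1.toFun m n h = p.2.toFun m n h}

theorem TwoSidedPath.self_mem_cyl {k : ℕ} {Λ : KGraph k} (x : TwoSidedPath Λ)
    (m n : Fin k → ℤ) (h : m ≤ n) : x ∈ ZCyl Λ (x.toFun m n h) m := by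
  show x.toFun m (m + Λ.degZ (x.toFun m n h)) _ = x.toFun m n h
  apply x.toFun_congr rfl
  funext i
  show m i + (Λ.deg (x.toFun m n h) i : ℤ) = n i
  have h' := x.deg_eq m n h i
  omega

theorem degZ_obj0 {k : ℕ} {Λ : KGraph k} (x : TwoSidedPath Λ) :
    Λ.degZ x.obj0 = 0 := by
  funext i
  show (Λ.deg (x.toFun 0 0 le_rfl) i : ℤ) = 0
  have h' := x.deg_eq 0 0 le_rfl i
  simp only [Pi.zero_apply] at h'
  omega

theorem mem_vertex_cyl {k : ℕ} {Λ : KGraph k} {x z : TwoSidedPath Λ}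
    (hz : z ∈ ZCyl Λ x.obj0 0) : z.obj0 = x.obj0 := by
  have h0 : (0 : Fin k → ℤ) = 0 + Λ.degZ x.obj0 := by rw [degZ_obj0]; simp
  calc z.obj0 = z.toFun 0 (0 + Λ.degZ x.obj0) (le_add_degZ Λ 0 x.obj0) :=
        z.toFun_congr rfl h0 le_rfl (le_add_degZ Λ 0 x.obj0)
    _ = x.obj0 := hz


/-!
Every segment `x(m, m')` of a path `x ∈ Z(λ, n)` is a factor of a segment `x(a, b) = α λ β`,
and by (★) only finitely many `α` and `β` occur; so each segment takes finitely many values on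
`Z(λ, n)`. Along an ultrafilter containing `Z(λ, n)` every segment is therefore eventually
constant, the eventual values form a path of `Z(λ, n)`, and the ultrafilter converges to it
because the topology is generated by conditions on single segments. When `Λ⁰` is finite,
`Λ^Δ` is the finite union of the cylinders `Z(v, 0)`.
-/

open Topology

theorem Set.Finite.image_of_determined {α β γ : Type*} {S : Set α} {g : α → β} {h : α → γ}
    (hg : (g '' S).Finite) (hgh : ∀ x ∈ S, ∀ y ∈ S, g x = g y → h x = h y) :
    (h '' S).Finite := by
  have hfiber : ∀ c, (h '' (S ∩ g ⁻¹' {c})).Subsingleton := by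
    rintro c _ ⟨x, ⟨hx, hxc⟩, rfl⟩ _ ⟨y, ⟨hy, hyc⟩, rfl⟩
    exact hgh x hx y hy (hxc.trans hyc.symm)
  refine (hg.biUnion fun c _ => (hfiber c).finite).subset ?_
  rintro _ ⟨x, hx, rfl⟩
  exact Set.mem_biUnion (Set.mem_image_of_mem g hx) ⟨x, ⟨hx, rfl⟩, rfl⟩

theorem Ultrafilter.exists_eventually_eq_of_finite_image {α β : Type*} (U : Ultrafilter α)
    {S : Set α} {f : α → β} (hS : S ∈ U) (hf : (f '' S).Finite) :
    ∃ c, ∀ᶠ x in U, f x = c := by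
  obtain ⟨c, -, hc⟩ := (U.map f).eq_pure_of_finite_mem hf (Filter.image_mem_map hS)
  exact ⟨c, show {c} ∈ U.map f by rw [hc]; rfl⟩

namespace KGraph

variable {k : ℕ} (Λ : KGraph k)

theorem comp_congr {a a' b b' : Λ.Mor} (ha : a = a') (hb : b = b')
    (h : Λ.src a = Λ.rng b) (h' : Λ.src a' = Λ.rng b') :
    Λ.comp a b h = Λ.comp a' b' h' := by
  subst ha hb; rfl

theorem comp_inj {a a' b b' : Λ.Mor} (h : Λ.src a = Λ.rng b) (h' : Λ.src a' = Λ.rng b')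
    (ha : Λ.deg a = Λ.deg a') (hb : Λ.deg b = Λ.deg b')
    (hab : Λ.comp a b h = Λ.comp a' b' h') : a = a' ∧ b = b' :=
  Prod.ext_iff.mp <| (Λ.factor _ _ _ (Λ.deg_comp a b h)).unique
    (y₁ := (a, b)) (y₂ := (a', b')) ⟨rfl, rfl, h, rfl⟩ ⟨ha.symm, hb.symm, h', hab.symm⟩

variable {Λ}

theorem Star.finite_of_src_eq_rng (hstar : Λ.Star) (p : Fin k → ℕ) (lam : Λ.Mor) :
    {a | Λ.deg a = p ∧ Λ.src a = Λ.rng lam}.Finite :=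
  ((hstar p).2 _ (Λ.deg_rng lam)).2

theorem Star.finite_of_rng_eq_src (hstar : Λ.Star) (p : Fin k → ℕ) (lam : Λ.Mor) :
    {b | Λ.deg b = p ∧ Λ.rng b = Λ.src lam}.Finite :=
  ((hstar p).2 _ (Λ.deg_src lam)).1

end KGraph

namespace TwoSidedPath

variable {k : ℕ} {Λ : KGraph k}

theorem deg_toFun (x : TwoSidedPath Λ) {m n : Fin k → ℤ} (h : m ≤ n) :
    Λ.deg (x.toFun m n h) = fun i => (n i - m i).toNat := by
  funext i
  have := x.deg_eq m n h i
  omega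

theorem isVertex_obj0 (x : TwoSidedPath Λ) : Λ.IsVertex x.obj0 := by
  simp only [KGraph.IsVertex, obj0, deg_toFun, sub_self]
  rfl

theorem toFun_eq_of_toFun_eq_of_toFun_eq {x y : TwoSidedPath Λ} {a m b : Fin k → ℤ}
    (ham : a ≤ m) (hmb : m ≤ b) (h₁ : x.toFun a m ham = y.toFun a m ham)
    (h₂ : x.toFun m b hmb = y.toFun m b hmb) :
    x.toFun a b (ham.trans hmb) = y.toFun a b (ham.trans hmb) := by
  rw [← x.comp_eq, ← y.comp_eq]
  exact Λ.comp_congr h₁ h₂ _ _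

theorem toFun_eq_and_toFun_eq_of_toFun_eq {x y : TwoSidedPath Λ} {a m b : Fin k → ℤ}
    (ham : a ≤ m) (hmb : m ≤ b)
    (h : x.toFun a b (ham.trans hmb) = y.toFun a b (ham.trans hmb)) :
    x.toFun a m ham = y.toFun a m ham ∧ x.toFun m b hmb = y.toFun m b hmb := by
  rw [← x.comp_eq a m b ham hmb, ← y.comp_eq a m b ham hmb] at h
  exact Λ.comp_inj _ _ (by rw [deg_toFun, deg_toFun]) (by rw [deg_toFun, deg_toFun]) h

theorem toFun_eq_of_toFun_eq_of_le {x y : TwoSidedPath Λ} {a m m' b : Fin k → ℤ}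
    (ham : a ≤ m) (hmm' : m ≤ m') (hm'b : m' ≤ b)
    (h : x.toFun a b (ham.trans (hmm'.trans hm'b)) =
      y.toFun a b (ham.trans (hmm'.trans hm'b))) :
    x.toFun m m' hmm' = y.toFun m m' hmm' :=
  (toFun_eq_and_toFun_eq_of_toFun_eq hmm' hm'b
    (toFun_eq_and_toFun_eq_of_toFun_eq ham (hmm'.trans hm'b) h).2).1

def ofEventuallyEq (F : Filter (TwoSidedPath Λ)) [F.NeBot]
    (c : ∀ m n : Fin k → ℤ, m ≤ n → Λ.Mor)
    (hc : ∀ m n h, ∀ᶠ x in F, x.toFun m n h = c m n h) : TwoSidedPath Λ where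
  toFun := c
  deg_eq m n h i := by
    obtain ⟨x, hx⟩ := (hc m n h).exists
    rw [← hx]
    exact x.deg_eq m n h i
  src_eq m n h := by
    obtain ⟨x, hx, hx'⟩ := ((hc m n h).and (hc n n le_rfl)).exists
    rw [← hx, ← hx']
    exact x.src_eq m n h
  rng_eq m n h := by
    obtain ⟨x, hx, hx'⟩ := ((hc m n h).and (hc m m le_rfl)).exists
    rw [← hx, ← hx']
    exact x.rng_eq m n h
  comp_eq l m n h₁ h₂ := by
    obtain ⟨x, hx₁, hx₂, hx⟩ :=
      ((hc l m h₁).and ((hc m n h₂).and (hc l n (h₁.trans h₂)))).exists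
    rw [← hx, ← x.comp_eq]
    exact Λ.comp_congr hx₁.symm hx₂.symm _ _

theorem le_nhds_ofEventuallyEq (F : Filter (TwoSidedPath Λ)) [F.NeBot]
    (c : ∀ m n : Fin k → ℤ, m ≤ n → Λ.Mor)
    (hc : ∀ m n h, ∀ᶠ x in F, x.toFun m n h = c m n h) :
    F ≤ 𝓝 (ofEventuallyEq F c hc) := by
  rw [nhds_generateFrom]
  refine le_iInf₂ ?_
  rintro _ ⟨hmem, lam, n, rfl⟩
  rw [Filter.le_principal_iff]
  filter_upwards [hc n (n + Λ.degZ lam) (le_add_degZ Λ n lam)] with y hy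
  exact hy.trans hmem

end TwoSidedPath

section Compactness

open TwoSidedPath

variable {k : ℕ} {Λ : KGraph k}

theorem finite_image_toFun_zCyl (hstar : Λ.Star) (lam : Λ.Mor) (n : Fin k → ℤ)
    {m m' : Fin k → ℤ} (hmm' : m ≤ m') :
    ((fun x : TwoSidedPath Λ => x.toFun m m' hmm') '' ZCyl Λ lam n).Finite := by
  -- `[a, b]` is the smallest box containing `[m, m']` and `[n, n + d(λ)]`
  set a := m ⊓ n
  set b := m' ⊔ (n + Λ.degZ lam)
  have han : a ≤ n := inf_le_right
  have hnb : n + Λ.degZ lam ≤ b := le_sup_right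
  have hlam := le_add_degZ Λ n lam
  set g := fun x : TwoSidedPath Λ => (x.toFun a n han, x.toFun (n + Λ.degZ lam) b hnb)
  have hg : (g '' ZCyl Λ lam n).Finite := by
    refine ((hstar.finite_of_src_eq_rng (fun i => (n i - a i).toNat) lam).prod
      (hstar.finite_of_rng_eq_src (fun i => (b i - (n + Λ.degZ lam) i).toNat) lam)).subset ?_
    rintro _ ⟨x, hx, rfl⟩
    refine ⟨⟨x.deg_toFun han, ?_⟩, ⟨x.deg_toFun hnb, ?_⟩⟩
    · rw [x.src_eq, ← x.rng_eq n _ hlam, hx]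
    · rw [x.rng_eq, ← x.src_eq n _ hlam, hx]
  refine hg.image_of_determined fun x hx y hy hxy => ?_
  obtain ⟨hα, hβ⟩ := Prod.ext_iff.mp hxy
  have hleft := toFun_eq_of_toFun_eq_of_toFun_eq han hlam hα (hx.trans hy.symm)
  exact toFun_eq_of_toFun_eq_of_le inf_le_left hmm' le_sup_left
    (toFun_eq_of_toFun_eq_of_toFun_eq (han.trans hlam) hnb hleft hβ)

theorem isCompact_zCyl (hstar : Λ.Star) (lam : Λ.Mor) (n : Fin k → ℤ) :
    IsCompact (ZCyl Λ lam n) := by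
  rw [isCompact_iff_ultrafilter_le_nhds']
  intro U hU
  choose c hc using fun m m' (hmm' : m ≤ m') =>
    U.exists_eventually_eq_of_finite_image hU (finite_image_toFun_zCyl hstar lam n hmm')
  refine ⟨ofEventuallyEq U c hc, ?_, le_nhds_ofEventuallyEq U c hc⟩
  obtain ⟨x, hxc, hx⟩ := ((hc _ _ (le_add_degZ Λ n lam)).and hU).exists
  exact hxc.symm.trans hx

theorem biUnion_zCyl_isVertex : ⋃ v ∈ {v | Λ.IsVertex v}, ZCyl Λ v 0 = Set.univ :=
  Set.eq_univ_of_forall fun x =>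
    Set.mem_biUnion x.isVertex_obj0 (x.self_mem_cyl 0 0 le_rfl)

end Compactness

theorem cylinder_isCompact_general {k : ℕ} (Λ : KGraph k) (hstar : Λ.Star) :
    (∀ (lam : Λ.Mor) (n : Fin k → ℤ), IsCompact (ZCyl Λ lam n)) ∧
    ({v : Λ.Mor | Λ.IsVertex v}.Finite → CompactSpace (TwoSidedPath Λ)) := by
  refine ⟨isCompact_zCyl hstar, fun hfin => ⟨?_⟩⟩
  rw [← biUnion_zCyl_isVertex]
  exact hfin.isCompact_biUnion fun v _ => isCompact_zCyl hstar v 0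

/-- Under (★) every cylinder set `Z(λ, n)` is compact in the
cylinder topology on `Λ^Δ`; if moreover `Λ⁰` is finite, `Λ^Δ` is compact. -/
theorem cylinder_isCompact {k : ℕ} (hk : 0 < k) (Λ : KGraph k) (hstar : Λ.Star) :
    (∀ (lam : Λ.Mor) (n : Fin k → ℤ), IsCompact (ZCyl Λ lam n)) ∧
    ({v : Λ.Mor | Λ.IsVertex v}.Finite → CompactSpace (TwoSidedPath Λ)) :=
  cylinder_isCompact_general Λ hstar
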